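/- arXiv:2306.07479 — 4 statements merged into one kernel-verified Lean document; each statement's English description precedes it below -/
import Mathlib

section
/- For any finite index set [P], any index j, and any two nonnegative real sequences (x_{1,1},...,x_{P,1}) and (x_{1,2},...,x_{P,2}), the difference of softmax values satisfies: e^{x_{j,1}}/Σ_{j'} e^{x_{j',1}} − e^{x_{j,2}}/Σ_{j'} e^{x_{j',2}} ≤ x_{j,1} + Σ_{j'≠j} x_{j',2} · e^{x_{j',2}} / Σ_{j''≠j} e^{x_{j'',2}}. -/
open Finset Real

/-- Softmax difference bound (second branch of Lemma A.2):
`softmax(x₁)_j − softmax(x₂)_j ≤ x₁ⱼ + ∑_{j'≠j} x₂ⱼ' e^{x₂ⱼ'} / ∑_{j''≠j} e^{x₂ⱼ''}`. -/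
theorem softmax_diff_le_linear (P : ℕ) (hP : 2 ≤ P) (j : Fin P)
    (x₁ x₂ : Fin P → ℝ) (h₁ : ∀ i, 0 ≤ x₁ i) (h₂ : ∀ i, 0 ≤ x₂ i) :
    Real.exp (x₁ j) / ∑ j' : Fin P, Real.exp (x₁ j') -
      Real.exp (x₂ j) / ∑ j' : Fin P, Real.exp (x₂ j') ≤
    x₁ j + ∑ j' ∈ Finset.univ.erase j,
      x₂ j' * Real.exp (x₂ j') / ∑ j'' ∈ Finset.univ.erase j, Real.exp (x₂ j'') := by
  have hj : j ∈ (Finset.univ : Finset (Fin P)) := Finset.mem_univ j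
  set a := x₁ j with ha
  set b := x₂ j with hb
  set s := Finset.univ.erase j with hs
  have hcard : s.card = P - 1 := by simp [hs, Finset.card_erase_of_mem]
  set n : ℝ := ((P - 1 : ℕ) : ℝ) with hn
  have hn1 : (1:ℝ) ≤ n := by
    have h' : 1 ≤ P - 1 := by omega
    show (1:ℝ) ≤ ((P - 1 : ℕ) : ℝ)
    exact_mod_cast h'
  set T := ∑ j' ∈ s, Real.exp (x₂ j') with hT
  set M := ∑ j' ∈ s, x₂ j' * Real.exp (x₂ j') with hM
  have hTn : n ≤ T := by
    have h1 : ∀ i ∈ s, (1:ℝ) ≤ Real.exp (x₂ i) := fun i _ => Real.one_le_exp (h₂ i)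
    calc n = s.card • (1:ℝ) := by simp [hcard, hn]
    _ ≤ T := Finset.card_nsmul_le_sum s _ 1 h1
  have hTpos : (0:ℝ) < T := lt_of_lt_of_le (by linarith) hTn
  have hMnonneg : 0 ≤ M := Finset.sum_nonneg fun i _ => mul_nonneg (h₂ i) (Real.exp_pos _).le
  have hMge : T - n ≤ M := by
    have hsub : T - n = ∑ i ∈ s, (Real.exp (x₂ i) - 1) := by
      rw [Finset.sum_sub_distrib]
      simp [hT, hn, hcard]
    rw [hsub]
    apply Finset.sum_le_sum
    intro i _
    have h := mul_le_mul_of_nonneg_right (Real.add_one_le_exp (-(x₂ i)))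
      (Real.exp_pos (x₂ i)).le
    rw [Real.exp_neg, inv_mul_cancel₀ (Real.exp_ne_zero (x₂ i))] at h
    nlinarith [h]
  have hS₂ : ∑ j' : Fin P, Real.exp (x₂ j') = Real.exp b + T := by
    rw [← Finset.add_sum_erase _ _ hj]
  have hS₁ : Real.exp a + n ≤ ∑ j' : Fin P, Real.exp (x₁ j') := by
    rw [← Finset.add_sum_erase _ _ hj]
    have h1 : ∀ i ∈ s, (1:ℝ) ≤ Real.exp (x₁ i) := fun i _ => Real.one_le_exp (h₁ i)
    have : n ≤ ∑ j' ∈ s, Real.exp (x₁ j') := by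
      calc n = s.card • (1:ℝ) := by simp [hcard, hn]
      _ ≤ _ := Finset.card_nsmul_le_sum s _ 1 h1
    linarith
  have key1 : Real.exp a / (∑ j' : Fin P, Real.exp (x₁ j')) ≤
      Real.exp a / (Real.exp a + n) := by
    gcongr
  have key2 : 1 / (1 + T) ≤ Real.exp b / (Real.exp b + T) := by
    rw [div_le_div_iff₀ (by positivity) (by positivity)]
    nlinarith [Real.one_le_exp (h₂ j), hTpos]
  have hE1 : Real.exp a - 1 ≤ a * Real.exp a := by
    have h := mul_le_mul_of_nonneg_right (Real.add_one_le_exp (-a)) (Real.exp_pos a).le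
    rw [Real.exp_neg, inv_mul_cancel₀ (Real.exp_ne_zero a)] at h
    nlinarith [h]
  have B1 : Real.exp a / (Real.exp a + n) - 1/(1+n) ≤ a := by
    rw [div_sub_div _ _ (by positivity) (by positivity), div_le_iff₀ (by positivity)]
    nlinarith [mul_le_mul_of_nonneg_left hE1 (by linarith : (0:ℝ) ≤ n),
      mul_nonneg (h₁ j) (Real.exp_pos a).le,
      mul_nonneg (h₁ j) (by linarith : (0:ℝ) ≤ n),
      mul_nonneg (mul_nonneg (h₁ j) (by linarith : (0:ℝ) ≤ n)) (by linarith : (0:ℝ) ≤ n),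
      mul_nonneg (mul_nonneg (h₁ j) (by linarith : (0:ℝ) ≤ n)) (Real.exp_pos a).le]
  have B2 : 1/(1+n) - 1/(1+T) ≤ M / T := by
    rw [div_sub_div _ _ (by positivity) (by positivity), div_le_div_iff₀ (by positivity) hTpos]
    nlinarith [mul_le_mul hMge (by nlinarith : T ≤ (1+n)*(1+T)) hTpos.le hMnonneg]
  rw [hS₂]
  calc Real.exp a / (∑ j' : Fin P, Real.exp (x₁ j')) - Real.exp b / (Real.exp b + T)
      ≤ Real.exp a / (Real.exp a + n) - 1/(1+T) := sub_le_sub key1 key2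
    _ ≤ a + M / T := by linarith
    _ = a + ∑ j' ∈ s, x₂ j' * Real.exp (x₂ j') / T := by rw [hM, Finset.sum_div]
end

section
/- For any finite index set [P], any index j, and any two nonnegative real sequences (x_{1,1},...,x_{P,1}) and (x_{1,2},...,x_{P,2}), the difference of softmax values satisfies: e^{x_{j,1}}/Σ_{j'} e^{x_{j',1}} − e^{x_{j,2}}/Σ_{j'} e^{x_{j',2}} ≤ |x_{j,1} − x_{j,2} − Σ_{j'≠j} (x_{j',1} − x_{j',2}) · e^{x_{j',2}} / Σ_{j''≠j} e^{x_{j'',2}}|. -/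
open Finset Real

/-- Softmax difference bound (first branch of Lemma A.2):
`softmax(x₁)_j − softmax(x₂)_j ≤ |x₁ⱼ − x₂ⱼ − ∑_{j'≠j} (x₁ⱼ' − x₂ⱼ') e^{x₂ⱼ'} / ∑_{j''≠j} e^{x₂ⱼ''}|`. -/
theorem softmax_diff_le_abs (P : ℕ) (hP : 2 ≤ P) (j : Fin P)
    (x₁ x₂ : Fin P → ℝ) (h₁ : ∀ i, 0 ≤ x₁ i) (h₂ : ∀ i, 0 ≤ x₂ i) :
    Real.exp (x₁ j) / ∑ j' : Fin P, Real.exp (x₁ j') -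
      Real.exp (x₂ j) / ∑ j' : Fin P, Real.exp (x₂ j') ≤
    |x₁ j - x₂ j - ∑ j' ∈ Finset.univ.erase j,
      (x₁ j' - x₂ j') * Real.exp (x₂ j') / ∑ j'' ∈ Finset.univ.erase j, Real.exp (x₂ j'')| := by
  set T := (Finset.univ : Finset (Fin P)).erase j with hT
  have hne : T.Nonempty := by
    rw [← Finset.card_pos, hT, Finset.card_erase_of_mem (Finset.mem_univ j),
      Finset.card_univ, Fintype.card_fin]
    omega
  set A := ∑ i ∈ T, Real.exp (x₁ i) with hA
  set B := ∑ i ∈ T, Real.exp (x₂ i) with hB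
  have hApos : 0 < A := Finset.sum_pos (fun i _ => Real.exp_pos _) hne
  have hBpos : 0 < B := Finset.sum_pos (fun i _ => Real.exp_pos _) hne
  set a := Real.exp (x₁ j) with ha
  set b := Real.exp (x₂ j) with hb
  have hapos : 0 < a := Real.exp_pos _
  have hbpos : 0 < b := Real.exp_pos _
  have hsum1 : ∑ j' : Fin P, Real.exp (x₁ j') = a + A :=
    (Finset.add_sum_erase _ _ (Finset.mem_univ j)).symm
  have hsum2 : ∑ j' : Fin P, Real.exp (x₂ j') = b + B :=
    (Finset.add_sum_erase _ _ (Finset.mem_univ j)).symm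
  rw [hsum1, hsum2]
  set u := x₁ j - x₂ j with hu
  set v := ∑ j' ∈ T, (x₁ j' - x₂ j') * Real.exp (x₂ j') / B with hv
  -- Jensen: exp v ≤ A / B
  have hw0 : ∀ i ∈ T, 0 ≤ Real.exp (x₂ i) / B := fun i _ => by positivity
  have hw1 : ∑ i ∈ T, Real.exp (x₂ i) / B = 1 := by
    rw [← Finset.sum_div, ← hB, div_self hBpos.ne']
  have hjensen : Real.exp v ≤ A / B := by
    have hv' : v = ∑ i ∈ T, (Real.exp (x₂ i) / B) • (x₁ i - x₂ i) := by
      rw [hv]; apply Finset.sum_congr rfl; intro i _; rw [smul_eq_mul]; ring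
    have := convexOn_exp.map_sum_le hw0 hw1 (fun i _ => Set.mem_univ (x₁ i - x₂ i))
    rw [← hv'] at this
    refine this.trans_eq ?_
    rw [eq_div_iff hBpos.ne', Finset.sum_mul, hA]
    apply Finset.sum_congr rfl
    intro i _
    rw [smul_eq_mul]
    field_simp
    rw [← Real.exp_add]
    ring_nf
  have hAB : Real.exp v * B ≤ A := by
    rw [← le_div_iff₀ hBpos]; exact hjensen
  have hau : a = b * Real.exp u := by
    rw [ha, hb, hu, ← Real.exp_add]; ring_nf
  rcases le_or_gt u v with hcase | hcase
  · -- LHS ≤ 0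
    have hle : a / (a + A) - b / (b + B) ≤ 0 := by
      rw [sub_nonpos, div_le_div_iff₀ (by linarith) (by linarith)]
      have heuv : Real.exp u ≤ Real.exp v := Real.exp_le_exp.mpr hcase
      nlinarith [mul_pos hbpos hBpos]
    exact hle.trans (abs_nonneg _)
  · refine le_trans ?_ (le_abs_self _)
    have hexp : Real.exp u - Real.exp v ≤ (u - v) * Real.exp u := by
      have h := Real.add_one_le_exp (v - u)
      have h5 : Real.exp v = Real.exp u * Real.exp (v - u) := by
        rw [← Real.exp_add]; ring_nf
      nlinarith [Real.exp_pos u]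
    rw [div_sub_div a b (by positivity : (a + A) ≠ 0) (by positivity : (b + B) ≠ 0),
      div_le_iff₀ (by positivity)]
    have key : a * B ≤ (a + A) * (b + B) := by nlinarith
    have h6 : (u - v) * (a * B) = (u - v) * (b * B * Real.exp u) := by rw [hau]; ring
    have h7 : b * B * Real.exp u = a * B := by rw [hau]; ring
    have hint1 : b * (Real.exp v * B) ≤ b * A := mul_le_mul_of_nonneg_left hAB hbpos.le
    have hint2 : b * B * (Real.exp u - Real.exp v) ≤ b * B * ((u - v) * Real.exp u) :=
      mul_le_mul_of_nonneg_left hexp (mul_nonneg hbpos.le hBpos.le)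
    have hint3 : (u - v) * (a * B) ≤ (u - v) * ((a + A) * (b + B)) :=
      mul_le_mul_of_nonneg_left key (sub_pos.mpr hcase).le
    nlinarith [hint1, hint2, hint3, h6, h7]
end

section
/- For any c ≥ 1 and β ∈ (0,1), W(c, β, 𝒟, P) ≤ G(β, 𝒟, P), where G(β, 𝒟, P) is the optimal value of max over unit vectors p_1,...,p_P ∈ ℝ^D of E_u[max_{j∈[P]} ⟨u, p_j⟩]. -/
/-! A feasible profile of the program defining `W` has
`‖p j‖ ≤ β^(1/c) · (win probability)^(1/c) ≤ 1`. Its vectors and almost every user are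
coordinatewise nonnegative, so every `⟪u, p j⟫` is nonnegative, and rescaling `p j` to unit
length (replacing `0` by a nonnegative basis vector) can only increase it. The rescaled profile
is feasible for `G` and has at least the same welfare. -/

open MeasureTheory Finset
open scoped RealInnerProductSpace

/-- Probability that producer `j` wins a user `u`. -/
noncomputable def winProb {D P : ℕ} (p : Fin P → EuclideanSpace ℝ (Fin D))
    (j : Fin P) (u : EuclideanSpace ℝ (Fin D)) : ℝ :=
  let A := Finset.univ.filter (fun j' : Fin P => ∀ j'' : Fin P, ⟪u, p j''⟫ ≤ ⟪u, p j'⟫)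
  if j ∈ A then (A.card : ℝ)⁻¹ else 0

/-- The optimal value `W(c, β, 𝒟, P)` of the constrained welfare program (5). -/
noncomputable def W (D P : ℕ) (c β : ℝ)
    (μ : Measure (EuclideanSpace ℝ (Fin D))) : ℝ :=
  sSup { w | ∃ p : Fin P → EuclideanSpace ℝ (Fin D),
    (∀ j i, 0 ≤ p j i) ∧
    (∀ j, ‖p j‖ ≤ β ^ (1 / c) * (∫ u, winProb p j u ∂μ) ^ (1 / c)) ∧
    w = ∫ u, ⨆ j, ⟪u, p j⟫ ∂μ }

/-- The optimal value `G(β, 𝒟, P)` of the unit-norm welfare program (6). -/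
noncomputable def G (D P : ℕ) (β : ℝ)
    (μ : Measure (EuclideanSpace ℝ (Fin D))) : ℝ :=
  sSup { w | ∃ p : Fin P → EuclideanSpace ℝ (Fin D),
    (∀ j, ‖p j‖ = 1) ∧ w = ∫ u, ⨆ j, ⟪u, p j⟫ ∂μ }

lemma winProb_mem_Icc {D P : ℕ} (p : Fin P → EuclideanSpace ℝ (Fin D)) (j : Fin P)
    (u : EuclideanSpace ℝ (Fin D)) : winProb p j u ∈ Set.Icc (0 : ℝ) 1 := by
  dsimp only [winProb]
  split_ifs with hj
  · have hcard : (1 : ℝ) ≤ _ := Nat.one_le_cast.mpr (Finset.card_pos.mpr ⟨j, hj⟩)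
    exact ⟨by positivity, inv_le_one_of_one_le₀ hcard⟩
  · exact ⟨le_rfl, zero_le_one⟩

lemma integral_winProb_mem_Icc {D P : ℕ} (μ : Measure (EuclideanSpace ℝ (Fin D)))
    [IsProbabilityMeasure μ] (p : Fin P → EuclideanSpace ℝ (Fin D)) (j : Fin P) :
    ∫ u, winProb p j u ∂μ ∈ Set.Icc (0 : ℝ) 1 := by
  refine ⟨integral_nonneg fun u => (winProb_mem_Icc p j u).1, ?_⟩
  have hbound : ∀ᵐ u ∂μ, ‖winProb p j u‖ ≤ 1 := ae_of_all _ fun u => by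
    rw [Real.norm_of_nonneg (winProb_mem_Icc p j u).1]
    exact (winProb_mem_Icc p j u).2
  simpa using (le_abs_self _).trans (norm_integral_le_of_norm_le_const hbound)

lemma norm_le_one_of_le_rpow_integral_winProb {D P : ℕ}
    {μ : Measure (EuclideanSpace ℝ (Fin D))} [IsProbabilityMeasure μ]
    {p : Fin P → EuclideanSpace ℝ (Fin D)} {j : Fin P} {c β : ℝ} (hc : 0 ≤ c)
    (hβ : β ∈ Set.Icc (0 : ℝ) 1)
    (h : ‖p j‖ ≤ β ^ (1 / c) * (∫ u, winProb p j u ∂μ) ^ (1 / c)) :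
    ‖p j‖ ≤ 1 := by
  obtain ⟨hI0, hI1⟩ := integral_winProb_mem_Icc μ p j
  have hc' : 0 ≤ 1 / c := by positivity
  exact h.trans (mul_le_one₀ (Real.rpow_le_one hβ.1 hβ.2 hc') (Real.rpow_nonneg hI0 _)
    (Real.rpow_le_one hI0 hI1 hc'))

lemma EuclideanSpace.inner_nonneg_of_nonneg {ι : Type*} [Fintype ι] {u v : EuclideanSpace ℝ ι}
    (hu : ∀ i, 0 ≤ u i) (hv : ∀ i, 0 ≤ v i) : 0 ≤ ⟪u, v⟫ := by
  rw [PiLp.inner_apply]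
  exact Finset.sum_nonneg fun i _ => mul_nonneg (hv i) (hu i)

section Unitize

variable {E : Type*} [NormedAddCommGroup E] [InnerProductSpace ℝ E]

open Classical in
noncomputable def unitize (e v : E) : E := if v = 0 then e else ‖v‖⁻¹ • v

lemma norm_unitize {e : E} (he : ‖e‖ = 1) (v : E) : ‖unitize e v‖ = 1 := by
  unfold unitize
  split_ifs with hv
  · exact he
  · rw [norm_smul, norm_inv, norm_norm, inv_mul_cancel₀ (norm_ne_zero_iff.mpr hv)]

lemma inner_le_inner_unitize {u e v : E} (hue : 0 ≤ ⟪u, e⟫) (huv : 0 ≤ ⟪u, v⟫)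
    (hv : ‖v‖ ≤ 1) : ⟪u, v⟫ ≤ ⟪u, unitize e v⟫ := by
  unfold unitize
  split_ifs with hv0
  · rwa [hv0, inner_zero_right]
  · rw [real_inner_smul_right]
    exact le_mul_of_one_le_left huv ((one_le_inv₀ (norm_pos_iff.mpr hv0)).mpr hv)

end Unitize

lemma abs_ciSup_le_of_abs_le {ι : Type*} [Finite ι] [Nonempty ι] {f : ι → ℝ} {C : ℝ}
    (h : ∀ i, |f i| ≤ C) : |⨆ i, f i| ≤ C := by
  have hbdd : BddAbove (Set.range f) := (Set.finite_range f).bddAbove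
  obtain ⟨i⟩ := ‹Nonempty ι›
  rw [abs_le]
  exact ⟨(neg_le_of_abs_le (h i)).trans (le_ciSup hbdd i),
    ciSup_le fun i => le_of_abs_le (h i)⟩

section SupInner

variable {E : Type*} [NormedAddCommGroup E] [InnerProductSpace ℝ E] {ι : Type*} [Finite ι]
  [Nonempty ι] {q : ι → E}

lemma abs_ciSup_inner_le_one {u : E} (hu : ‖u‖ ≤ 1) (hq : ∀ j, ‖q j‖ ≤ 1) :
    |⨆ j, ⟪u, q j⟫| ≤ 1 :=
  abs_ciSup_le_of_abs_le fun j => (abs_real_inner_le_norm u (q j)).trans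
    (mul_le_one₀ hu (norm_nonneg _) (hq j))

variable [MeasurableSpace E] {μ : Measure E}

lemma integrable_ciSup_inner [OpensMeasurableSpace E] [IsFiniteMeasure μ]
    (hμ : ∀ᵐ u ∂μ, ‖u‖ ≤ 1) (hq : ∀ j, ‖q j‖ ≤ 1) :
    Integrable (fun u => ⨆ j, ⟪u, q j⟫) μ := by
  have : Countable ι := Finite.to_countable
  have hmeas : Measurable fun u : E => ⨆ j, ⟪u, q j⟫ :=
    Measurable.iSup fun j => (continuous_id.inner continuous_const).measurable
  refine Integrable.mono' (integrable_const 1) hmeas.aestronglyMeasurable ?_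
  filter_upwards [hμ] with u hu
  exact abs_ciSup_inner_le_one hu hq

lemma integral_ciSup_inner_le_one [IsProbabilityMeasure μ] (hμ : ∀ᵐ u ∂μ, ‖u‖ ≤ 1)
    (hq : ∀ j, ‖q j‖ ≤ 1) : ∫ u, ⨆ j, ⟪u, q j⟫ ∂μ ≤ 1 := by
  have hbound : ∀ᵐ u ∂μ, ‖⨆ j, ⟪u, q j⟫‖ ≤ 1 := by
    filter_upwards [hμ] with u hu
    exact abs_ciSup_inner_le_one hu hq
  simpa using (le_abs_self _).trans (norm_integral_le_of_norm_le_const hbound)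

end SupInner

section RelaxedProgram

variable {D P : ℕ} [Nonempty (Fin P)] {μ : Measure (EuclideanSpace ℝ (Fin D))}
  [IsProbabilityMeasure μ]

lemma integral_ciSup_inner_le_G (β : ℝ) (hμ : ∀ᵐ u ∂μ, ‖u‖ ≤ 1)
    {q : Fin P → EuclideanSpace ℝ (Fin D)} (hq : ∀ j, ‖q j‖ = 1) :
    ∫ u, ⨆ j, ⟪u, q j⟫ ∂μ ≤ G D P β μ := by
  refine le_csSup ⟨1, ?_⟩ ⟨q, hq, rfl⟩
  rintro _ ⟨q', hq', rfl⟩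
  exact integral_ciSup_inner_le_one hμ fun j => (hq' j).le

lemma integral_ciSup_inner_le_G_of_norm_le_one (hD : 1 ≤ D) (β : ℝ)
    (hsupp : ∀ᵐ u ∂μ, ‖u‖ = 1 ∧ ∀ i, 0 ≤ u i)
    {p : Fin P → EuclideanSpace ℝ (Fin D)} (hp_nonneg : ∀ j i, 0 ≤ p j i)
    (hp_le_one : ∀ j, ‖p j‖ ≤ 1) :
    ∫ u, ⨆ j, ⟪u, p j⟫ ∂μ ≤ G D P β μ := by
  have hμ : ∀ᵐ u ∂μ, ‖u‖ ≤ 1 := hsupp.mono fun u hu => hu.1.le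
  let e : EuclideanSpace ℝ (Fin D) := EuclideanSpace.single ⟨0, hD⟩ 1
  have he : ∀ i, 0 ≤ e i := fun i => by
    by_cases h : i = ⟨0, hD⟩ <;> simp [e, h]
  let q j := unitize e (p j)
  have hq : ∀ j, ‖q j‖ = 1 := fun j => norm_unitize (by simp [e]) (p j)
  have hpq : ∀ᵐ u ∂μ, ⨆ j, ⟪u, p j⟫ ≤ ⨆ j, ⟪u, q j⟫ := by
    filter_upwards [hsupp] with u hu
    exact ciSup_mono (Set.finite_range _).bddAbove fun j =>
      inner_le_inner_unitize (EuclideanSpace.inner_nonneg_of_nonneg hu.2 he)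
        (EuclideanSpace.inner_nonneg_of_nonneg hu.2 (hp_nonneg j)) (hp_le_one j)
  have hp_sup_nonneg : ∀ᵐ u ∂μ, 0 ≤ ⨆ j, ⟪u, p j⟫ := by
    filter_upwards [hsupp] with u hu
    exact Real.iSup_nonneg fun j => EuclideanSpace.inner_nonneg_of_nonneg hu.2 (hp_nonneg j)
  calc ∫ u, ⨆ j, ⟪u, p j⟫ ∂μ
      ≤ ∫ u, ⨆ j, ⟪u, q j⟫ ∂μ :=
        integral_mono_of_nonneg hp_sup_nonneg (integrable_ciSup_inner hμ fun j => (hq j).le) hpq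
    _ ≤ G D P β μ := integral_ciSup_inner_le_G β hμ hq

end RelaxedProgram

/-- Lemma D.2: `W(c, β, 𝒟, P) ≤ G(β, 𝒟, P)` for any `c ≥ 1` and `β ∈ (0,1)`. -/
theorem W_le_G (D P : ℕ) (hD : 1 ≤ D) (hP : 1 ≤ P) (c β : ℝ)
    (hc : 1 ≤ c) (hβ : β ∈ Set.Ioo (0:ℝ) 1)
    (μ : Measure (EuclideanSpace ℝ (Fin D))) [IsProbabilityMeasure μ]
    (hsupp : ∀ᵐ u ∂μ, ‖u‖ = 1 ∧ ∀ i, 0 ≤ u i) :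
    W D P c β μ ≤ G D P β μ := by
  have : Nonempty (Fin P) := ⟨⟨0, hP⟩⟩
  have hzero_feasible : ∀ j, ‖(0 : Fin P → EuclideanSpace ℝ (Fin D)) j‖ ≤
      β ^ (1 / c) * (∫ u, winProb 0 j u ∂μ) ^ (1 / c) := fun j => by
    rw [Pi.zero_apply, norm_zero]
    exact mul_nonneg (Real.rpow_nonneg hβ.1.le _)
      (Real.rpow_nonneg (integral_winProb_mem_Icc μ 0 j).1 _)
  refine csSup_le ⟨_, 0, fun _ _ => le_rfl, hzero_feasible, rfl⟩ ?_
  rintro _ ⟨p, hp_nonneg, hp_norm, rfl⟩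
  refine integral_ciSup_inner_le_G_of_norm_le_one hD β hsupp hp_nonneg fun j => ?_
  exact norm_le_one_of_le_rpow_integral_winProb (by linarith) (Set.Ioo_subset_Icc_self hβ)
    (hp_norm j)
end

section
/- Let u_1, u_2 be unit vectors in ℝ²_{≥0} with angle θ between them, and let 𝒟 be uniform on {u_1, u_2}. For any c ≥ 1, β ∈ (0,1], and P ≥ 2, the optimal welfare W(c, β, 𝒟, P) equals β^{1/c}·cos(θ/2) if θ < 2·arccos(2^{−1/c}), and equals (β/2)^{1/c} if θ ≥ 2·arccos(2^{−1/c}). -/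
open MeasureTheory Finset Real
open scoped RealInnerProductSpace

/-!
Welfare against the uniform law on `{u₁, u₂}` is the average of the two users' best offers.
If one producer is best for both users, its content `p` satisfies `‖p‖ ≤ β^{1/c}`, so the welfare is
`⟪midpoint u₁ u₂, p⟫ ≤ β^{1/c} ‖midpoint u₁ u₂‖ = β^{1/c} cos(θ/2)`. If two different producers
win, their shares `q, q'` of the users satisfy `q + q' ≤ 1`, and concavity of `x ↦ x^{1/c}` bounds
the welfare by `β^{1/c} ((q + q') / 2)^{1/c} ≤ (β/2)^{1/c}`. Both bounds are attained (one producer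
at `β^{1/c}` in the direction of the midpoint, resp. two producers at `(β/2)^{1/c} u₁` and
`(β/2)^{1/c} u₂`), so `W` is their maximum, and comparing `cos(θ/2)` with `2^{-1/c}` gives the
threshold.
-/

section Winners

variable {D P : ℕ} (p : Fin P → EuclideanSpace ℝ (Fin D)) (u : EuclideanSpace ℝ (Fin D))

noncomputable def winners : Finset (Fin P) :=
  Finset.univ.filter (fun j' : Fin P => ∀ j'' : Fin P, ⟪u, p j''⟫ ≤ ⟪u, p j'⟫)

lemma winProb_eq_ite (j : Fin P) :
    winProb p j u = if j ∈ winners p u then ((winners p u).card : ℝ)⁻¹ else 0 := rfl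

lemma mem_winners {j : Fin P} : j ∈ winners p u ↔ ∀ k, ⟪u, p k⟫ ≤ ⟪u, p j⟫ := by
  simp [winners]

lemma winners_nonempty [Nonempty (Fin P)] : (winners p u).Nonempty :=
  let ⟨j, hj⟩ := Finite.exists_max (fun k => ⟪u, p k⟫)
  ⟨j, (mem_winners p u).2 hj⟩

lemma winProb_nonneg (j : Fin P) : 0 ≤ winProb p j u := by
  rw [winProb_eq_ite]; split <;> positivity

lemma sum_winProb [Nonempty (Fin P)] : ∑ j, winProb p j u = 1 := by
  simp_rw [winProb_eq_ite]
  rw [Finset.sum_ite_mem, univ_inter, sum_const, nsmul_eq_mul]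
  exact mul_inv_cancel₀ (Nat.cast_ne_zero.2 (winners_nonempty p u).card_pos.ne')

lemma winProb_le_one (j : Fin P) : winProb p j u ≤ 1 := by
  have : Nonempty (Fin P) := ⟨j⟩
  rw [← sum_winProb p u]
  exact single_le_sum (fun k _ => winProb_nonneg p u k) (mem_univ j)

lemma winProb_add_winProb_le_one {j k : Fin P} (hjk : j ≠ k) :
    winProb p j u + winProb p k u ≤ 1 := by
  have : Nonempty (Fin P) := ⟨j⟩
  rw [← sum_winProb p u, ← sum_pair hjk (f := fun i => winProb p i u)]
  exact sum_le_sum_of_subset_of_nonneg (subset_univ _) (fun k _ _ => winProb_nonneg p u k)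

lemma winProb_eq_one {j : Fin P} (hj : ∀ k ≠ j, ⟪u, p k⟫ < ⟪u, p j⟫) : winProb p j u = 1 := by
  have : winners p u = {j} := by
    ext k
    rw [mem_winners, mem_singleton]
    refine ⟨fun hk => ?_, fun hk l => ?_⟩
    · by_contra hkj
      exact (hj k hkj).not_ge (hk j)
    · subst hk
      rcases eq_or_ne l k with rfl | hl
      exacts [le_rfl, (hj l hl).le]
  simp [winProb_eq_ite, this]

lemma winProb_eq_zero {j k : Fin P} (hjk : ⟪u, p j⟫ < ⟪u, p k⟫) : winProb p j u = 0 := by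
  rw [winProb_eq_ite, if_neg fun hj => ((mem_winners p u).1 hj k).not_gt hjk]

lemma iSup_inner_eq {j : Fin P} (hj : ∀ k, ⟪u, p k⟫ ≤ ⟪u, p j⟫) :
    ⨆ k, ⟪u, p k⟫ = ⟪u, p j⟫ :=
  have : Nonempty (Fin P) := ⟨j⟩
  le_antisymm (ciSup_le hj) (le_ciSup (Set.finite_range fun k => ⟪u, p k⟫).bddAbove j)

end Winners

noncomputable def uniformPair {α : Type*} [MeasurableSpace α] (a b : α) : Measure α :=
  (2 : ENNReal)⁻¹ • (Measure.dirac a + Measure.dirac b)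

lemma integral_uniformPair {α : Type*} [MeasurableSpace α] [MeasurableSingletonClass α]
    (f : α → ℝ) (a b : α) : ∫ x, f x ∂uniformPair a b = (f a + f b) / 2 := by
  rw [uniformPair, integral_smul_measure, integral_add_measure (integrable_dirac enorm_lt_top)
    (integrable_dirac enorm_lt_top), integral_dirac, integral_dirac]
  simp only [ENNReal.toReal_inv, ENNReal.toReal_ofNat, smul_eq_mul]
  ring

section Midpoint

variable {F : Type*} [NormedAddCommGroup F] [InnerProductSpace ℝ F]

lemma inner_midpoint_left (u₁ u₂ v : F) :
    ⟪midpoint ℝ u₁ u₂, v⟫ = (⟪u₁, v⟫ + ⟪u₂, v⟫) / 2 := by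
  rw [midpoint_eq_smul_add, real_inner_smul_left, inner_add_left]
  norm_num
  ring

lemma norm_midpoint_sq {u₁ u₂ : F} (hu₁ : ‖u₁‖ = 1) (hu₂ : ‖u₂‖ = 1) :
    ‖midpoint ℝ u₁ u₂‖ ^ 2 = (1 + ⟪u₁, u₂⟫) / 2 := by
  rw [midpoint_eq_smul_add, norm_smul, mul_pow, norm_add_sq_real, hu₁, hu₂]
  norm_num
  ring

lemma norm_midpoint_eq_cos {u₁ u₂ : F} (hu₁ : ‖u₁‖ = 1) (hu₂ : ‖u₂‖ = 1) :
    ‖midpoint ℝ u₁ u₂‖ = cos (arccos ⟪u₁, u₂⟫ / 2) := by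
  have h := abs_real_inner_le_norm u₁ u₂
  rw [hu₁, hu₂, one_mul, abs_le] at h
  rw [cos_half (by linarith [arccos_nonneg ⟪u₁, u₂⟫, pi_pos]) (arccos_le_pi _),
    cos_arccos h.1 h.2, ← norm_midpoint_sq hu₁ hu₂, sqrt_sq (norm_nonneg _)]

end Midpoint

lemma rpow_add_rpow_le_two_mul_rpow_half {r x y : ℝ} (hr₀ : 0 ≤ r) (hr₁ : r ≤ 1)
    (hx : 0 ≤ x) (hy : 0 ≤ y) : x ^ r + y ^ r ≤ 2 * ((x + y) / 2) ^ r := by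
  have := (concaveOn_rpow hr₀ hr₁).2 (Set.mem_Ici.2 hx) (Set.mem_Ici.2 hy)
    (by norm_num : (0:ℝ) ≤ 1 / 2) (by norm_num : (0:ℝ) ≤ 1 / 2) (by norm_num)
  simp only [smul_eq_mul] at this
  rw [← mul_add, ← mul_add, one_div_mul_eq_div 2 (x + y)] at this
  linarith

section Profiles

variable {D P : ℕ} {u : EuclideanSpace ℝ (Fin D)}

lemma winProb_of_forall_lt {p : Fin P → EuclideanSpace ℝ (Fin D)} {j : Fin P}
    (hj : ∀ k ≠ j, ⟪u, p k⟫ < ⟪u, p j⟫) (k : Fin P) :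
    winProb p k u = if k = j then 1 else 0 := by
  split_ifs with hk
  · exact hk ▸ winProb_eq_one p u hj
  · exact winProb_eq_zero p u (hj k hk)

lemma iSup_inner_of_forall_lt {p : Fin P → EuclideanSpace ℝ (Fin D)} {j : Fin P}
    (hj : ∀ k ≠ j, ⟪u, p k⟫ < ⟪u, p j⟫) : ⨆ k, ⟪u, p k⟫ = ⟪u, p j⟫ :=
  iSup_inner_eq p u fun k => (eq_or_ne k j).elim (fun hk => hk ▸ le_rfl) fun hk => (hj k hk).le

lemma inner_single_lt {j k : Fin P} (hk : k ≠ j) {v : EuclideanSpace ℝ (Fin D)}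
    (hv : 0 < ⟪u, v⟫) :
    let p : Fin P → EuclideanSpace ℝ (Fin D) := Pi.single j v
    ⟪u, p k⟫ < ⟪u, p j⟫ := by
  simpa [hk] using hv

lemma inner_single_add_single_lt {j₁ j₂ k : Fin P} (hj : j₁ ≠ j₂) (hk : k ≠ j₁)
    {v₁ v₂ : EuclideanSpace ℝ (Fin D)} (hv₁ : 0 < ⟪u, v₁⟫) (hv₂ : ⟪u, v₂⟫ < ⟪u, v₁⟫) :
    let p : Fin P → EuclideanSpace ℝ (Fin D) := Pi.single j₁ v₁ + Pi.single j₂ v₂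
    ⟪u, p k⟫ < ⟪u, p j₁⟫ := by
  rcases eq_or_ne k j₂ with rfl | hk₂
  · simpa [hk, hj]
  · simpa [hk, hk₂, hj]

end Profiles

noncomputable def achievableWelfare (D P : ℕ) (c β : ℝ)
    (μ : Measure (EuclideanSpace ℝ (Fin D))) : Set ℝ :=
  { w | ∃ p : Fin P → EuclideanSpace ℝ (Fin D),
    (∀ j i, 0 ≤ p j i) ∧
    (∀ j, ‖p j‖ ≤ β ^ (1 / c) * (∫ u, winProb p j u ∂μ) ^ (1 / c)) ∧
    w = ∫ u, ⨆ j, ⟪u, p j⟫ ∂μ }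

lemma W_eq_sSup (D P : ℕ) (c β : ℝ) (μ : Measure (EuclideanSpace ℝ (Fin D))) :
    W D P c β μ = sSup (achievableWelfare D P c β μ) := rfl

lemma real_inner_nonneg_of_nonneg {D : ℕ} {x y : EuclideanSpace ℝ (Fin D)}
    (hx : ∀ i, 0 ≤ x i) (hy : ∀ i, 0 ≤ y i) : 0 ≤ ⟪x, y⟫ := by
  rw [PiLp.inner_apply]
  exact sum_nonneg fun i _ => mul_nonneg (hy i) (hx i)

section TwoUsers

variable {D P : ℕ} {c β : ℝ} {u₁ u₂ : EuclideanSpace ℝ (Fin D)}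

lemma half_inner_add_inner_le_concentration (hc : 0 ≤ c) (hβ : 0 ≤ β)
    {p : Fin P → EuclideanSpace ℝ (Fin D)} {j : Fin P}
    (hp : ‖p j‖ ≤ β ^ (1 / c) * (∫ u, winProb p j u ∂uniformPair u₁ u₂) ^ (1 / c)) :
    (⟪u₁, p j⟫ + ⟪u₂, p j⟫) / 2 ≤ β ^ (1 / c) * ‖midpoint ℝ u₁ u₂‖ := by
  have hshare : ‖p j‖ ≤ β ^ (1 / c) := by
    refine hp.trans (mul_le_of_le_one_right (by positivity) (rpow_le_one ?_ ?_ (by positivity)))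
    all_goals rw [integral_uniformPair]
    · linarith [winProb_nonneg p u₁ j, winProb_nonneg p u₂ j]
    · linarith [winProb_le_one p u₁ j, winProb_le_one p u₂ j]
  calc (⟪u₁, p j⟫ + ⟪u₂, p j⟫) / 2 = ⟪midpoint ℝ u₁ u₂, p j⟫ := (inner_midpoint_left ..).symm
    _ ≤ ‖midpoint ℝ u₁ u₂‖ * ‖p j‖ := real_inner_le_norm _ _
    _ ≤ β ^ (1 / c) * ‖midpoint ℝ u₁ u₂‖ := by
      rw [mul_comm]; exact mul_le_mul_of_nonneg_right hshare (norm_nonneg _)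

lemma half_inner_add_inner_le_specialization (hc : 1 ≤ c) (hβ : 0 ≤ β) (hu₁ : ‖u₁‖ = 1)
    (hu₂ : ‖u₂‖ = 1) {p : Fin P → EuclideanSpace ℝ (Fin D)}
    (hp : ∀ j, ‖p j‖ ≤ β ^ (1 / c) * (∫ u, winProb p j u ∂uniformPair u₁ u₂) ^ (1 / c))
    {j k : Fin P} (hjk : j ≠ k) :
    (⟪u₁, p j⟫ + ⟪u₂, p k⟫) / 2 ≤ (β / 2) ^ (1 / c) := by
  simp only [integral_uniformPair] at hp
  set q : Fin P → ℝ := fun j => (winProb p j u₁ + winProb p j u₂) / 2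
  change ∀ j, ‖p j‖ ≤ β ^ (1 / c) * q j ^ (1 / c) at hp
  have hq : ∀ j, 0 ≤ q j := fun j => by
    simp only [q]; linarith [winProb_nonneg p u₁ j, winProb_nonneg p u₂ j]
  have hqq : q j + q k ≤ 1 := by
    simp only [q]
    linarith [winProb_add_winProb_le_one p u₁ hjk, winProb_add_winProb_le_one p u₂ hjk]
  have h₁ := real_inner_le_norm u₁ (p j)
  have h₂ := real_inner_le_norm u₂ (p k)
  rw [hu₁, one_mul] at h₁
  rw [hu₂, one_mul] at h₂
  calc (⟪u₁, p j⟫ + ⟪u₂, p k⟫) / 2 ≤ β ^ (1 / c) * ((q j ^ (1 / c) + q k ^ (1 / c)) / 2) := by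
        linarith [hp j, hp k]
    _ ≤ β ^ (1 / c) * ((q j + q k) / 2) ^ (1 / c) := by
        gcongr
        linarith [rpow_add_rpow_le_two_mul_rpow_half (by positivity)
          (div_le_one_of_le₀ hc (by positivity)) (hq j) (hq k)]
    _ ≤ β ^ (1 / c) * (1 / 2) ^ (1 / c) := by
        gcongr
        linarith [hq j, hq k]
    _ = (β / 2) ^ (1 / c) := by rw [← mul_rpow hβ (by norm_num), mul_one_div]

lemma welfare_le_max [Nonempty (Fin P)] (hc : 1 ≤ c) (hβ : 0 ≤ β) (hu₁ : ‖u₁‖ = 1)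
    (hu₂ : ‖u₂‖ = 1) {p : Fin P → EuclideanSpace ℝ (Fin D)}
    (hp : ∀ j, ‖p j‖ ≤ β ^ (1 / c) * (∫ u, winProb p j u ∂uniformPair u₁ u₂) ^ (1 / c)) :
    ∫ u, ⨆ j, ⟪u, p j⟫ ∂uniformPair u₁ u₂ ≤
      max (β ^ (1 / c) * ‖midpoint ℝ u₁ u₂‖) ((β / 2) ^ (1 / c)) := by
  obtain ⟨j, hj⟩ := exists_eq_ciSup_of_finite (f := fun j => ⟪u₁, p j⟫)
  obtain ⟨k, hk⟩ := exists_eq_ciSup_of_finite (f := fun j => ⟪u₂, p j⟫)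
  rw [integral_uniformPair, ← hj, ← hk]
  rcases eq_or_ne j k with rfl | hjk
  · exact (half_inner_add_inner_le_concentration (by positivity) hβ (hp j)).trans
      (le_max_left _ _)
  · exact (half_inner_add_inner_le_specialization hc hβ hu₁ hu₂ hp hjk).trans
      (le_max_right _ _)

lemma concentration_mem_achievableWelfare (j : Fin P) (hβ : 0 < β) (hu₁ : ‖u₁‖ = 1)
    (hu₂ : ‖u₂‖ = 1) (hpos₁ : ∀ i, 0 ≤ u₁ i) (hpos₂ : ∀ i, 0 ≤ u₂ i) :
    β ^ (1 / c) * ‖midpoint ℝ u₁ u₂‖ ∈ achievableWelfare D P c β (uniformPair u₁ u₂) := by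
  set m := midpoint ℝ u₁ u₂
  have hρ := real_inner_nonneg_of_nonneg hpos₁ hpos₂
  have hm_sq := norm_midpoint_sq hu₁ hu₂
  have hm : 0 < ‖m‖ := by nlinarith [norm_nonneg m]
  have hβc : 0 < β ^ (1 / c) := rpow_pos_of_pos hβ _
  set t := β ^ (1 / c) / ‖m‖
  have ht : 0 < t := div_pos hβc hm
  have hv₁ : 0 < ⟪u₁, t • m⟫ := by
    rw [real_inner_smul_right, real_inner_comm, inner_midpoint_left, real_inner_self_eq_norm_sq,
      hu₁, real_inner_comm]
    exact mul_pos ht (by linarith)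
  have hv₂ : 0 < ⟪u₂, t • m⟫ := by
    rw [real_inner_smul_right, real_inner_comm, inner_midpoint_left, real_inner_self_eq_norm_sq,
      hu₂]
    exact mul_pos ht (by linarith)
  set p : Fin P → EuclideanSpace ℝ (Fin D) := Pi.single j (t • m)
  have hwin₁ : ∀ k ≠ j, ⟪u₁, p k⟫ < ⟪u₁, p j⟫ := fun k hk => inner_single_lt hk hv₁
  have hwin₂ : ∀ k ≠ j, ⟪u₂, p k⟫ < ⟪u₂, p j⟫ := fun k hk => inner_single_lt hk hv₂
  refine ⟨p, fun k i => ?_, fun k => ?_, ?_⟩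
  · rcases eq_or_ne k j with rfl | hk
    · simp only [p, Pi.single_eq_same, m, midpoint_eq_smul_add, PiLp.smul_apply,
        PiLp.add_apply, smul_eq_mul]
      exact mul_nonneg ht.le (mul_nonneg (by norm_num) (add_nonneg (hpos₁ i) (hpos₂ i)))
    · simp [p, hk]
  · rw [integral_uniformPair, winProb_of_forall_lt hwin₁, winProb_of_forall_lt hwin₂]
    rcases eq_or_ne k j with rfl | hk
    · have hnorm : ‖t • m‖ = β ^ (1 / c) := by
        rw [norm_smul, norm_of_nonneg ht.le, div_mul_cancel₀ _ hm.ne']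
      simp only [p, Pi.single_eq_same, hnorm, if_true]
      norm_num
    · simp only [p, hk, if_false, Pi.single_eq_of_ne hk, norm_zero]
      exact mul_nonneg (rpow_nonneg hβ.le _) (rpow_nonneg (by norm_num) _)
  · rw [integral_uniformPair, iSup_inner_of_forall_lt hwin₁, iSup_inner_of_forall_lt hwin₂,
      ← inner_midpoint_left]
    show β ^ (1 / c) * ‖m‖ = ⟪m, p j⟫
    simp only [p]
    rw [Pi.single_eq_same, real_inner_smul_right, real_inner_self_eq_norm_sq, sq, ← mul_assoc,
      div_mul_cancel₀ _ hm.ne']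

lemma specialization_mem_achievableWelfare {j₁ j₂ : Fin P} (hj : j₁ ≠ j₂) (hβ : 0 < β)
    (hu₁ : ‖u₁‖ = 1) (hu₂ : ‖u₂‖ = 1) (hpos₁ : ∀ i, 0 ≤ u₁ i) (hpos₂ : ∀ i, 0 ≤ u₂ i)
    (hne : u₁ ≠ u₂) :
    (β / 2) ^ (1 / c) ∈ achievableWelfare D P c β (uniformPair u₁ u₂) := by
  set s := (β / 2) ^ (1 / c)
  have hs : 0 < s := rpow_pos_of_pos (half_pos hβ) _
  have hρ : ⟪u₁, u₂⟫ < 1 := (inner_lt_one_iff_real_of_norm_eq_one hu₁ hu₂).2 hne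
  have hself₁ : ⟪u₁, s • u₁⟫ = s := by
    rw [real_inner_smul_right, real_inner_self_eq_norm_sq, hu₁, one_pow, mul_one]
  have hself₂ : ⟪u₂, s • u₂⟫ = s := by
    rw [real_inner_smul_right, real_inner_self_eq_norm_sq, hu₂, one_pow, mul_one]
  have hcross : ∀ {u v : EuclideanSpace ℝ (Fin D)}, ⟪u, v⟫ < 1 → ⟪u, s • v⟫ < s := fun h => by
    rw [real_inner_smul_right]; nlinarith
  set p : Fin P → EuclideanSpace ℝ (Fin D) := Pi.single j₁ (s • u₁) + Pi.single j₂ (s • u₂)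
  have hwin₁ : ∀ k ≠ j₁, ⟪u₁, p k⟫ < ⟪u₁, p j₁⟫ := fun k hk =>
    inner_single_add_single_lt hj hk (hself₁.symm ▸ hs) (hself₁.symm ▸ hcross hρ)
  have hwin₂ : ∀ k ≠ j₂, ⟪u₂, p k⟫ < ⟪u₂, p j₂⟫ := by
    rw [show p = Pi.single j₂ (s • u₂) + Pi.single j₁ (s • u₁) from add_comm _ _]
    exact fun k hk => inner_single_add_single_lt hj.symm hk (hself₂.symm ▸ hs)
      (hself₂.symm ▸ hcross (real_inner_comm u₁ u₂ ▸ hρ))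
  have hp₁ : p j₁ = s • u₁ := by simp [p, hj]
  have hp₂ : p j₂ = s • u₂ := by simp [p, hj.symm]
  have hp : ∀ k, k ≠ j₁ → k ≠ j₂ → p k = 0 := fun k h₁ h₂ => by simp [p, h₁, h₂]
  have hhalf : β ^ (1 / c) * ((1 + 0) / 2) ^ (1 / c) = s := by
    rw [← mul_rpow hβ.le (by norm_num), add_zero, mul_one_div]
  refine ⟨p, fun k i => ?_, fun k => ?_, ?_⟩
  · by_cases h₁ : k = j₁
    · subst h₁; rw [hp₁]; exact mul_nonneg hs.le (hpos₁ i)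
    by_cases h₂ : k = j₂
    · subst h₂; rw [hp₂]; exact mul_nonneg hs.le (hpos₂ i)
    · simp [hp k h₁ h₂]
  · rw [integral_uniformPair, winProb_of_forall_lt hwin₁, winProb_of_forall_lt hwin₂]
    by_cases h₁ : k = j₁
    · subst h₁
      rw [hp₁, norm_smul, hu₁, if_pos rfl, if_neg hj, mul_one, norm_of_nonneg hs.le, hhalf]
    by_cases h₂ : k = j₂
    · subst h₂
      rw [hp₂, norm_smul, hu₂, if_neg h₁, if_pos rfl, add_comm, mul_one, norm_of_nonneg hs.le,
        hhalf]
    · rw [hp k h₁ h₂, norm_zero, if_neg h₁, if_neg h₂]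
      exact mul_nonneg (rpow_nonneg hβ.le _) (rpow_nonneg (by norm_num) _)
  · rw [integral_uniformPair, iSup_inner_of_forall_lt hwin₁, iSup_inner_of_forall_lt hwin₂, hp₁,
      hp₂, hself₁, hself₂, add_self_div_two]

lemma W_uniformPair (hP : 2 ≤ P) (hc : 1 ≤ c) (hβ : 0 < β) (hu₁ : ‖u₁‖ = 1) (hu₂ : ‖u₂‖ = 1)
    (hpos₁ : ∀ i, 0 ≤ u₁ i) (hpos₂ : ∀ i, 0 ≤ u₂ i) :
    W D P c β (uniformPair u₁ u₂) =
      max (β ^ (1 / c) * ‖midpoint ℝ u₁ u₂‖) ((β / 2) ^ (1 / c)) := by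
  let j₁ : Fin P := ⟨0, by omega⟩
  let j₂ : Fin P := ⟨1, by omega⟩
  have hj : j₁ ≠ j₂ := by simp [j₁, j₂, Fin.ext_iff]
  have : Nonempty (Fin P) := ⟨j₁⟩
  rw [W_eq_sSup]
  refine IsGreatest.csSup_eq
    ⟨?_, fun w ⟨p, _, hp, hw⟩ => hw ▸ welfare_le_max hc hβ.le hu₁ hu₂ hp⟩
  rcases le_total ((β / 2) ^ (1 / c)) (β ^ (1 / c) * ‖midpoint ℝ u₁ u₂‖) with h | h
  · rw [max_eq_left h]
    exact concentration_mem_achievableWelfare j₁ hβ hu₁ hu₂ hpos₁ hpos₂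
  · rw [max_eq_right h]
    refine specialization_mem_achievableWelfare hj hβ hu₁ hu₂ hpos₁ hpos₂ fun hu => ?_
    subst hu
    rw [midpoint_self, hu₁, mul_one] at h
    exact (rpow_lt_rpow (half_pos hβ).le (half_lt_self hβ) (by positivity)).not_ge h

end TwoUsers

lemma lt_two_mul_arccos_iff {θ t : ℝ} (hθ₀ : 0 ≤ θ) (hθ : θ ≤ 2 * π) (ht₀ : -1 ≤ t)
    (ht₁ : t ≤ 1) : θ < 2 * arccos t ↔ t < cos (θ / 2) := by
  have hcos := abs_le.1 (abs_cos_le_one (θ / 2))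
  have h := strictAntiOn_arccos.lt_iff_gt ⟨hcos.1, hcos.2⟩ ⟨ht₀, ht₁⟩
  rwa [arccos_cos (by linarith) (by linarith), div_lt_iff₀' two_pos] at h

/-- Proposition 5.4: two-user case in `ℝ²`. With `𝒟` uniform on unit vectors
`u₁, u₂ ∈ ℝ²_{≥0}` at angle `θ`, the welfare is `β^{1/c} cos(θ/2)` if
`θ < 2 arccos(2^{−1/c})`, and `(β/2)^{1/c}` otherwise. -/
theorem W_two_users (P : ℕ) (hP : 2 ≤ P) (c β θ : ℝ)
    (hc : 1 ≤ c) (hβ : β ∈ Set.Ioc (0:ℝ) 1)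
    (u₁ u₂ : EuclideanSpace ℝ (Fin 2))
    (hu₁ : ‖u₁‖ = 1) (hu₂ : ‖u₂‖ = 1)
    (hpos₁ : ∀ i, 0 ≤ u₁ i) (hpos₂ : ∀ i, 0 ≤ u₂ i)
    (hθ : θ = Real.arccos ⟪u₁, u₂⟫)
    (μ : Measure (EuclideanSpace ℝ (Fin 2)))
    (hμ : μ = (2:ENNReal)⁻¹ • (Measure.dirac u₁ + Measure.dirac u₂)) :
    (θ < 2 * Real.arccos ((2:ℝ) ^ (-(1 / c))) →
      W 2 P c β μ = β ^ (1 / c) * Real.cos (θ / 2)) ∧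
    (2 * Real.arccos ((2:ℝ) ^ (-(1 / c))) ≤ θ →
      W 2 P c β μ = (β / 2) ^ (1 / c)) := by
  have hhalf : (β / 2) ^ (1 / c) = β ^ (1 / c) * 2 ^ (-(1 / c)) := by
    rw [div_rpow hβ.1.le zero_le_two, rpow_neg zero_le_two, div_eq_mul_inv]
  have hW : W 2 P c β μ = max (β ^ (1 / c) * cos (θ / 2)) (β ^ (1 / c) * 2 ^ (-(1 / c))) := by
    rw [hμ, hθ, ← norm_midpoint_eq_cos hu₁ hu₂, ← hhalf]
    exact W_uniformPair hP hc hβ.1 hu₁ hu₂ hpos₁ hpos₂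
  have hthreshold : θ < 2 * arccos (2 ^ (-(1 / c))) ↔ 2 ^ (-(1 / c)) < cos (θ / 2) :=
    lt_two_mul_arccos_iff (hθ ▸ arccos_nonneg _) (by linarith [hθ ▸ arccos_le_pi _, pi_pos])
      (by linarith [rpow_pos_of_pos two_pos (-(1 / c))])
      (rpow_le_one_of_one_le_of_nonpos one_le_two (neg_nonpos.2 (by positivity)))
  have hβc : 0 ≤ β ^ (1 / c) := rpow_nonneg hβ.1.le _
  refine ⟨fun h => hW.trans (max_eq_left ?_),
    fun h => (hW.trans (max_eq_right ?_)).trans hhalf.symm⟩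
  · exact mul_le_mul_of_nonneg_left (hthreshold.1 h).le hβc
  · exact mul_le_mul_of_nonneg_left (not_lt.1 (hthreshold.not.1 h.not_gt)) hβc
end
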